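/- arXiv:1306.1705 — 3 statements merged into one kernel-verified Lean document; each statement's English description precedes it below -/
import Mathlib

section
/- Let E and V be finite types and let s, t : E → V be the source and target maps of a finite oriented multigraph Γ. For z : E → ℤ define the boundary ∂z : V → ℤ by ∂z(v) = ∑_{e : t(e)=v} z(e) − ∑_{e : s(e)=v} z(e), and call z a cycle when ∂z = 0. Then for every labeling ℓ : E → ℤ the following are equivalent: (a) ∑_{e ∈ E} ℓ(e)·z(e) = 0 for every cycle z; (b) there exists f : V → ℤ such that ℓ(e) = f(t(e)) − f(s(e)) for every edge e. -/
set_option linter.unusedSectionVars false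

section Aux

variable {E V : Type*} [Fintype E] [Fintype V] [DecidableEq V]

/-- boundary of an integral edge chain -/
private def bnd (s t : E → V) (z : E → ℤ) (v : V) : ℤ :=
  (∑ e : E, if t e = v then z e else 0) - (∑ e : E, if s e = v then z e else 0)

private lemma sum_ite_add (p : E → Prop) [DecidablePred p] (z₁ z₂ : E → ℤ) :
    (∑ e : E, if p e then z₁ e + z₂ e else 0)
      = (∑ e : E, if p e then z₁ e else 0) + (∑ e : E, if p e then z₂ e else 0) := by
  rw [← Finset.sum_add_distrib]
  exact Finset.sum_congr rfl fun e _ => by split <;> simp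

private lemma sum_ite_neg (p : E → Prop) [DecidablePred p] (z : E → ℤ) :
    (∑ e : E, if p e then -z e else 0) = -∑ e : E, if p e then z e else 0 := by
  rw [← Finset.sum_neg_distrib]
  exact Finset.sum_congr rfl fun e _ => by split <;> simp

private lemma bnd_zero (s t : E → V) (v : V) : bnd s t (fun _ => 0) v = 0 := by
  simp [bnd]

private lemma bnd_add (s t : E → V) (z₁ z₂ : E → ℤ) (v : V) :
    bnd s t (fun e => z₁ e + z₂ e) v = bnd s t z₁ v + bnd s t z₂ v := by
  simp only [bnd]
  rw [sum_ite_add (fun e => t e = v) z₁ z₂, sum_ite_add (fun e => s e = v) z₁ z₂]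
  ring

private lemma bnd_neg (s t : E → V) (z : E → ℤ) (v : V) :
    bnd s t (fun e => -z e) v = -bnd s t z v := by
  simp only [bnd]
  rw [sum_ite_neg (fun e => t e = v) z, sum_ite_neg (fun e => s e = v) z]
  ring

private lemma bnd_single [DecidableEq E] (s t : E → V) (e : E) (c : ℤ) (v : V) :
    bnd s t (fun e' => if e' = e then c else 0) v
      = (if t e = v then c else 0) - (if s e = v then c else 0) := by
  simp only [bnd]
  rw [show (∑ e' : E, if t e' = v then (if e' = e then c else 0) else 0)
      = (∑ e' : E, if e' = e then (if t e' = v then c else 0) else 0) by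
    refine Finset.sum_congr rfl fun e' _ => ?_
    by_cases h1 : t e' = v <;> by_cases h2 : e' = e <;> simp [h1, h2]]
  rw [show (∑ e' : E, if s e' = v then (if e' = e then c else 0) else 0)
      = (∑ e' : E, if e' = e then (if s e' = v then c else 0) else 0) by
    refine Finset.sum_congr rfl fun e' _ => ?_
    by_cases h1 : s e' = v <;> by_cases h2 : e' = e <;> simp [h1, h2]]
  rw [Finset.sum_ite_eq' Finset.univ e (fun e' => if t e' = v then c else 0)]
  rw [Finset.sum_ite_eq' Finset.univ e (fun e' => if s e' = v then c else 0)]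
  simp

/-- summation by parts -/
private lemma sum_by_parts (s t : E → V) (f : V → ℤ) (z : E → ℤ) :
    ∑ e : E, (f (t e) - f (s e)) * z e = ∑ v : V, f v * bnd s t z v := by
  rw [show (∑ e : E, (f (t e) - f (s e)) * z e)
      = (∑ e : E, f (t e) * z e) - ∑ e : E, f (s e) * z e by
    rw [← Finset.sum_sub_distrib]; exact Finset.sum_congr rfl fun e _ => by ring]
  rw [show (∑ v : V, f v * bnd s t z v)
      = (∑ v : V, f v * ∑ e : E, if t e = v then z e else 0)
        - ∑ v : V, f v * ∑ e : E, if s e = v then z e else 0 by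
    rw [← Finset.sum_sub_distrib]
    exact Finset.sum_congr rfl fun v _ => by rw [bnd]; ring]
  congr 1
  · rw [show (∑ v : V, f v * ∑ e : E, if t e = v then z e else 0)
        = (∑ v : V, ∑ e : E, if t e = v then f v * z e else 0) by
      refine Finset.sum_congr rfl fun v _ => ?_
      rw [Finset.mul_sum]; exact Finset.sum_congr rfl fun e _ => by split <;> simp]
    rw [Finset.sum_comm]
    refine Finset.sum_congr rfl fun e _ => ?_
    rw [Finset.sum_ite_eq Finset.univ (t e) (fun v => f v * z e)]
    simp
  · rw [show (∑ v : V, f v * ∑ e : E, if s e = v then z e else 0)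
        = (∑ v : V, ∑ e : E, if s e = v then f v * z e else 0) by
      refine Finset.sum_congr rfl fun v _ => ?_
      rw [Finset.mul_sum]; exact Finset.sum_congr rfl fun e _ => by split <;> simp]
    rw [Finset.sum_comm]
    refine Finset.sum_congr rfl fun e _ => ?_
    rw [Finset.sum_ite_eq Finset.univ (s e) (fun v => f v * z e)]
    simp

/-- connectivity within a finset of edges -/
private def ConnRel (s t : E → V) (F : Finset E) (v w : V) : Prop :=
  ∃ e ∈ F, (s e = v ∧ t e = w) ∨ (s e = w ∧ t e = v)

/-- from a connection within `F` we get a chain supported in `F` with boundary `δ_w - δ_v` -/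
private lemma exists_path_chain (s t : E → V) (F : Finset E) (v w : V)
    (h : Relation.EqvGen (ConnRel s t F) v w) :
    ∃ z : E → ℤ, (∀ e ∉ F, z e = 0) ∧
      ∀ u, bnd s t z u = (if w = u then 1 else 0) - (if v = u then 1 else 0) := by
  classical
  induction h with
  | rel v w hvw =>
    obtain ⟨e, heF, h⟩ := hvw
    rcases h with ⟨hs, ht⟩ | ⟨hs, ht⟩
    · refine ⟨fun e' => if e' = e then 1 else 0, ?_, ?_⟩
      · intro e' he'; simp only [ite_eq_right_iff]; rintro rfl; exact absurd heF he'
      · intro u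
        rw [bnd_single]
        subst hs; subst ht
        by_cases h1 : t e = u <;> by_cases h2 : s e = u <;> simp [h1, h2, eq_comm]
    · refine ⟨fun e' => if e' = e then -1 else 0, ?_, ?_⟩
      · intro e' he'; simp only [ite_eq_right_iff]; rintro rfl; exact absurd heF he'
      · intro u
        rw [bnd_single]
        subst hs; subst ht
        by_cases h1 : t e = u <;> by_cases h2 : s e = u <;> simp [h1, h2, eq_comm]
  | refl v =>
    exact ⟨fun _ => 0, fun _ _ => rfl, fun u => by rw [bnd_zero]; ring⟩
  | symm v w _ ih =>
    obtain ⟨z, hz0, hzb⟩ := ih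
    refine ⟨fun e => -z e, fun e he => by dsimp only; rw [hz0 e he]; ring, fun u => ?_⟩
    rw [bnd_neg, hzb]; ring
  | trans v w x _ _ ih1 ih2 =>
    obtain ⟨z₁, hz₁0, hz₁b⟩ := ih1
    obtain ⟨z₂, hz₂0, hz₂b⟩ := ih2
    refine ⟨fun e => z₁ e + z₂ e,
      fun e he => by dsimp only; rw [hz₁0 e he, hz₂0 e he]; ring, fun u => ?_⟩
    rw [bnd_add, hz₁b, hz₂b]; ring

end Aux

/-- For a finite oriented multigraph with edge set `E`, vertex set `V`, source map `s` and
target map `t`, an integral labeling `ℓ` of the edges pairs to zero with every cycle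
(`z : E → ℤ` with zero boundary) if and only if it is the coboundary of some `f : V → ℤ`. -/
theorem labeling_orthogonal_to_cycles_iff_coboundary
    (E V : Type*) [Fintype E] [Fintype V] [DecidableEq V]
    (s t : E → V) (ℓ : E → ℤ) :
    (∀ z : E → ℤ,
        (∀ v : V,
          (∑ e : E, if t e = v then z e else 0) - (∑ e : E, if s e = v then z e else 0) = 0) →
        ∑ e : E, ℓ e * z e = 0)
    ↔ ∃ f : V → ℤ, ∀ e : E, ℓ e = f (t e) - f (s e) := by
  classical
  constructor
  · intro H
    suffices h : ∀ F : Finset E, ∃ f : V → ℤ, ∀ e ∈ F, ℓ e = f (t e) - f (s e) by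
      obtain ⟨f, hf⟩ := h Finset.univ
      exact ⟨f, fun e => hf e (Finset.mem_univ e)⟩
    intro F
    induction F using Finset.induction with
    | empty => exact ⟨fun _ => 0, fun e he => absurd he (Finset.notMem_empty e)⟩
    | @insert e0 F he0 ih =>
      obtain ⟨f, hf⟩ := ih
      by_cases hcon : Relation.EqvGen (ConnRel s t F) (s e0) (t e0)
      · -- there is a cycle through e0; orthogonality forces the label to match
        obtain ⟨z, hz0, hzb⟩ := exists_path_chain s t F (s e0) (t e0) hcon
        set z' : E → ℤ := fun e => z e + (if e = e0 then -1 else 0) with hz'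
        have hbz' : ∀ u, bnd s t z' u = 0 := by
          intro u
          rw [hz', bnd_add, hzb, bnd_single]
          by_cases h1 : t e0 = u <;> by_cases h2 : s e0 = u <;> simp [h1, h2, eq_comm]
        have h1 : ∑ e : E, ℓ e * z' e = 0 := H z' (fun v => hbz' v)
        have h2 : ∑ e : E, (f (t e) - f (s e)) * z' e = 0 := by
          rw [sum_by_parts]
          exact Finset.sum_eq_zero fun v _ => by rw [hbz' v, mul_zero]
        have h3 : ∑ e : E, (ℓ e - (f (t e) - f (s e))) * z' e = 0 := by
          rw [show (∑ e : E, (ℓ e - (f (t e) - f (s e))) * z' e)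
              = (∑ e : E, ℓ e * z' e) - ∑ e : E, (f (t e) - f (s e)) * z' e by
            rw [← Finset.sum_sub_distrib]; exact Finset.sum_congr rfl fun e _ => by ring]
          rw [h1, h2]; ring
        have h4 : ∑ e : E, (ℓ e - (f (t e) - f (s e))) * z' e
            = (ℓ e0 - (f (t e0) - f (s e0))) * z' e0 := by
          rw [← Finset.sum_subset (Finset.subset_univ {e0})]
          · simp
          · intro e _ he
            simp only [Finset.mem_singleton] at he
            by_cases heF : e ∈ F
            · rw [show ℓ e - (f (t e) - f (s e)) = 0 by rw [hf e heF]; ring, zero_mul]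
            · have hze : z' e = 0 := by
                rw [hz']; dsimp only; rw [hz0 e heF, if_neg he]; ring
              rw [hze, mul_zero]
        have hz'e0 : z' e0 = -1 := by
          rw [hz']; dsimp only; rw [hz0 e0 he0, if_pos rfl]; ring
        have key : ℓ e0 = f (t e0) - f (s e0) := by
          rw [h4, hz'e0] at h3; omega
        refine ⟨f, fun e he => ?_⟩
        rcases Finset.mem_insert.mp he with rfl | heF
        · exact key
        · exact hf e heF
      · -- shift f on the connected component of t e0
        set δ : ℤ := ℓ e0 - (f (t e0) - f (s e0)) with hδ
        refine ⟨fun v => f v + (if Relation.EqvGen (ConnRel s t F) (t e0) v then δ else 0),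
          fun e he => ?_⟩
        rcases Finset.mem_insert.mp he with rfl | heF
        · dsimp only
          rw [if_pos (Relation.EqvGen.refl (t e)), if_neg ?_]
          · rw [hδ]; ring
          · intro h
            exact hcon (Relation.EqvGen.symm _ _ h)
        · have hedge : Relation.EqvGen (ConnRel s t F) (s e) (t e) :=
            Relation.EqvGen.rel _ _ ⟨e, heF, Or.inl ⟨rfl, rfl⟩⟩
          have hiff : Relation.EqvGen (ConnRel s t F) (t e0) (t e)
              ↔ Relation.EqvGen (ConnRel s t F) (t e0) (s e) :=
            ⟨fun h => h.trans _ _ _ (hedge.symm _ _), fun h => h.trans _ _ _ hedge⟩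
          dsimp only
          rw [hf e heF]
          by_cases h : Relation.EqvGen (ConnRel s t F) (t e0) (t e)
          · rw [if_pos h, if_pos (hiff.mp h)]; ring
          · rw [if_neg h, if_neg (fun h' => h (hiff.mpr h'))]; ring
  · intro ⟨f, hf⟩ z hz
    have hb : ∀ v, bnd s t z v = 0 := hz
    calc ∑ e : E, ℓ e * z e = ∑ e : E, (f (t e) - f (s e)) * z e :=
          Finset.sum_congr rfl fun e _ => by rw [hf e]
      _ = ∑ v : V, f v * bnd s t z v := sum_by_parts s t f z
      _ = 0 := Finset.sum_eq_zero fun v _ => by rw [hb v, mul_zero]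
end

section
/- Let A be a commutative ℚ-algebra and let a : ℕ → A with a(0) = 0. Let f be the formal power series ∑_{k≥1} a(k) Xᵏ. Then for every n ∈ ℕ, the coefficient of Xⁿ in exp(f) := ∑_{m≥0} (1/m!)·f^m (a finite sum in each degree, since f has zero constant term, so only m ≤ n contribute) equals ∑_{λ} ∏_{s} (1/k_s(λ)!)·a(s)^{k_s(λ)}, where λ runs over the partitions of n and k_s(λ) denotes the multiplicity of the part s in λ. -/
/-!
Only `a 1, …, a n` contribute to the coefficient of `Xⁿ`, so `mk a` may be replaced by the
polynomial `∑_{k=1}^n a k Xᵏ`. By the multinomial theorem its `m`-th power is a sum over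
multisets `μ` of `m` parts in `[1, n]`, each weighted by its number of orderings
`m! / ∏ₛ kₛ(μ)!`; the factor `1/m!` of the exponential cancels the `m!`. The multisets with
sum `n`, over all `m ≤ n`, are exactly the partitions of `n`.
-/

open PowerSeries Finset
open scoped Nat

namespace Multiset

variable {α : Type*} [DecidableEq α]

theorem countPerms_mul_prod_factorial_count (μ : Multiset α) :
    μ.countPerms * ∏ s ∈ μ.toFinset, (μ.count s)! = (card μ)! := by
  rw [mul_comm, countPerms, Finsupp.multinomial_eq, toFinsupp_support]
  simpa only [toFinsupp_apply, toFinset_sum_count_eq] using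
    Nat.multinomial_spec μ.toFinset μ.toFinsupp

theorem inv_factorial_card_mul_countPerms (μ : Multiset α) :
    ((card μ)! : ℚ)⁻¹ * μ.countPerms = ∏ s ∈ μ.toFinset, ((μ.count s)! : ℚ)⁻¹ := by
  rw [prod_inv_distrib, inv_mul_eq_iff_eq_mul₀ (by positivity),
    eq_mul_inv_iff_mul_eq₀ (by positivity)]
  exact_mod_cast countPerms_mul_prod_factorial_count μ

theorem inv_factorial_card_smul_countPerms_mul_prod_map {A : Type*} [CommSemiring A]
    [Algebra ℚ A] (a : α → A) (μ : Multiset α) :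
    ((card μ)! : ℚ)⁻¹ • ((μ.countPerms : A) * (μ.map a).prod)
      = ∏ s ∈ μ.toFinset, ((μ.count s)! : ℚ)⁻¹ • a s ^ μ.count s := by
  rw [Finset.prod_smul, ← inv_factorial_card_mul_countPerms, ← Finset.prod_multiset_map_count,
    mul_smul, ← nsmul_eq_mul, Nat.cast_smul_eq_nsmul]

end Multiset

namespace PowerSeries

variable {R : Type*} [CommSemiring R]

theorem coeff_pow_congr {n : ℕ} {f g : R⟦X⟧} (h : ∀ i ≤ n, coeff i f = coeff i g) (m : ℕ) :
    coeff n (f ^ m) = coeff n (g ^ m) := by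
  have htrunc : trunc (n + 1) f = trunc (n + 1) g := by
    ext i
    simp only [coeff_trunc]
    split_ifs with hi
    exacts [h i (Nat.lt_succ_iff.mp hi), rfl]
  rw [← coeff_coe_trunc_of_lt n.lt_succ_self, ← trunc_trunc_pow, htrunc, trunc_trunc_pow,
    coeff_coe_trunc_of_lt n.lt_succ_self]

theorem multiset_prod_map_monomial (a : ℕ → R) (μ : Multiset ℕ) :
    (μ.map fun k => monomial k (a k)).prod = monomial μ.sum (μ.map a).prod := by
  induction μ using Multiset.induction_on with
  | empty => simp
  | cons k μ ih => simp [ih, monomial_mul_monomial]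

theorem coeff_sum_monomial_pow (s : Finset ℕ) (a : ℕ → R) (m n : ℕ) :
    coeff n ((∑ k ∈ s, monomial k (a k)) ^ m)
      = ∑ μ ∈ s.sym m with μ.val.sum = n,
          ((μ : Multiset ℕ).countPerms : R) * ((μ : Multiset ℕ).map a).prod := by
  simp [sum_pow, multiset_prod_map_monomial, ← nsmul_eq_mul, coeff_monomial, sum_filter, eq_comm]

end PowerSeries

theorem Nat.Partition.card_parts_le {n : ℕ} (p : n.Partition) : Multiset.card p.parts ≤ n := by
  simpa [← p.parts_sum] using Multiset.card_nsmul_le_sum (fun _ hi => p.parts_pos hi)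

theorem Nat.Partition.sum_eq_sum_range_sum_sym {M : Type*} [AddCommMonoid M] (n : ℕ)
    (w : Multiset ℕ → M) :
    ∑ p : n.Partition, w p.parts
      = ∑ m ∈ range (n + 1), ∑ μ ∈ (Icc 1 n).sym m with μ.val.sum = n, w μ := by
  have mem_iff {m : ℕ} (μ : Sym ℕ m) : (⟨m, μ⟩ : Σ m, Sym ℕ m) ∈
      (range (n + 1)).sigma (fun m => {μ ∈ (Icc 1 n).sym m | μ.val.sum = n}) ↔
      m ≤ n ∧ (∀ i ∈ μ, 1 ≤ i ∧ i ≤ n) ∧ μ.val.sum = n := by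
    rw [mem_sigma, mem_filter, mem_sym_iff, mem_range, Nat.lt_succ_iff]
    simp only [mem_Icc]
  rw [sum_sigma']
  refine sum_bij (fun p _ => ⟨_, ⟨p.parts, rfl⟩⟩) (fun p _ => ?_) (fun p _ q _ h => ?_)
    (fun x hx => ?_) (fun p _ => rfl)
  · exact (mem_iff _).2
      ⟨p.card_parts_le, fun i hi => ⟨p.parts_pos hi, p.le_of_mem_parts hi⟩, p.parts_sum⟩
  · exact Nat.Partition.ext (congrArg (fun x => x.2.val) h)
  · obtain ⟨_, μ, rfl⟩ := x
    obtain ⟨-, hpos, hsum⟩ := (mem_iff _).1 hx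
    exact ⟨⟨μ, fun hi => (hpos _ hi).1, hsum⟩, mem_univ _, rfl⟩

/-- For a formal power series `f = ∑_{k≥1} a k • Xᵏ` with zero constant term over a
commutative `ℚ`-algebra, the coefficient of `Xⁿ` in `exp f = ∑_m (1/m!) • f^m`
(where only `m ≤ n` contribute in degree `n`) equals
`∑_{λ ⊢ n} ∏_s (1/k_s(λ)!) • (a s)^{k_s(λ)}`, the sum running over partitions `λ` of `n`
and `k_s(λ)` denoting the multiplicity of the part `s` in `λ`. -/
theorem coeff_exp_eq_sum_over_partitions (A : Type*) [CommRing A] [Algebra ℚ A]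
    (a : ℕ → A) (ha : a 0 = 0) (n : ℕ) :
    PowerSeries.coeff (R := A) n
        (∑ m ∈ Finset.range (n + 1),
          ((m.factorial : ℚ)⁻¹) • (PowerSeries.mk a) ^ m)
      = ∑ p : Nat.Partition n, ∏ s ∈ p.parts.toFinset,
          (((p.parts.count s).factorial : ℚ)⁻¹) • (a s) ^ (p.parts.count s) := by
  have htrunc : ∀ i ≤ n, coeff i (mk a) = coeff i (∑ k ∈ Icc 1 n, monomial k (a k)) := by
    intro i hi
    simp only [coeff_mk, map_sum, coeff_monomial, sum_ite_eq, mem_Icc, hi, and_true]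
    split_ifs with hpos
    · rfl
    · rw [Nat.lt_one_iff.mp (not_le.mp hpos), ha]
  rw [Nat.Partition.sum_eq_sum_range_sum_sym n
    fun μ => ∏ s ∈ μ.toFinset, ((μ.count s)! : ℚ)⁻¹ • a s ^ μ.count s, map_sum]
  refine sum_congr rfl fun m _ => ?_
  rw [coeff_smul, coeff_pow_congr htrunc, coeff_sum_monomial_pow, smul_sum]
  refine sum_congr rfl fun μ _ => ?_
  simpa only [Sym.card_coe] using
    Multiset.inv_factorial_card_smul_countPerms_mul_prod_map a (μ : Multiset ℕ)
end

section
/- Let R be a commutative ring, let H and H′ be R-modules, let j : H → H′ be a linear map, let W ⊆ H′ and Λ ⊆ H be submodules. In H × H consider the submodules L = {(x, −x) : x ∈ H}, L⁻ = Λ × Λ, and L⁺ = {(y, −y) : y ∈ H, j(y) ∈ W} + (ker j × {0}). Then L ∩ (L⁻ + L⁺) = (L ∩ L⁻) + (L ∩ L⁺). -/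
/-- Lagrangian computation: with `L = {(x,−x)}`, `L⁻ = Λ × Λ`, and
`L⁺ = {(y,−y) : j y ∈ W} + (ker j × 0)` inside `H × H`, one has
`L ∩ (L⁻ + L⁺) = (L ∩ L⁻) + (L ∩ L⁺)`. -/
theorem lagrangian_inf_sup_distrib {R H H' : Type*} [CommRing R]
    [AddCommGroup H] [Module R H] [AddCommGroup H'] [Module R H']
    (j : H →ₗ[R] H') (W : Submodule R H') (Λ : Submodule R H) :
    let d : H →ₗ[R] H × H := LinearMap.prod LinearMap.id (-LinearMap.id)
    let L : Submodule R (H × H) := LinearMap.range d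
    let Lm : Submodule R (H × H) := Λ.prod Λ
    let Lp : Submodule R (H × H) :=
      (Submodule.comap j W).map d ⊔ (LinearMap.ker j).prod ⊥
    L ⊓ (Lm ⊔ Lp) = (L ⊓ Lm) ⊔ (L ⊓ Lp) := by
  intro d L Lm Lp
  apply le_antisymm
  · rintro v ⟨⟨x, rfl⟩, hv⟩
    rw [SetLike.mem_coe, Submodule.mem_sup] at hv
    obtain ⟨u, hu, w, hw, huw⟩ := hv
    rw [Submodule.mem_sup] at hw
    obtain ⟨w1, hw1, w2, hw2, rfl⟩ := hw
    obtain ⟨y, hy, rfl⟩ := hw1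
    obtain ⟨hk, hz⟩ := hw2
    have hz' : w2.2 = 0 := hz
    have hx : x = y - u.2 := by
      have h2 := congrArg Prod.snd huw
      simp only [d, Prod.snd_add, LinearMap.prod_apply, Pi.prod, LinearMap.neg_apply,
        LinearMap.id_coe, id_eq, hz'] at h2
      have : u.2 + (-y + 0) = -x := h2
      linear_combination (norm := module) this
    rw [Submodule.mem_sup]
    refine ⟨d (-u.2), ⟨⟨-u.2, rfl⟩, ?_⟩, d y,
      ⟨⟨y, rfl⟩, Submodule.mem_sup_left ⟨y, hy, rfl⟩⟩, ?_⟩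
    · exact ⟨Λ.neg_mem hu.2, by simpa [d] using hu.2⟩
    · rw [← map_add]
      congr 1
      rw [hx]; abel
  · exact sup_le (inf_le_inf_left _ le_sup_left) (inf_le_inf_left _ le_sup_right)
end
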